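/- Let A ∈ ℝ^{n×n} be symmetric positive semidefinite, r < n, and suppose J ⊆ {1,…,n} with |J| = r maximizes |det(A(Ĵ,Ĵ))| over all index sets Ĵ ⊆ {1,…,n} with |Ĵ| = r, and A(J,J) is invertible. Then ‖A − A_J‖_max ≤ (r+1)·σ_{r+1}(A). -/

import Mathlib

open Matrix Finset

/-- Cross approximation `A_J = A(:,J) A(J,J)⁻¹ A(J,:)` built on the principal submatrix
indexed by the finite index set `J`. -/
noncomputable def crossApprox {n : ℕ} (A : Matrix (Fin n) (Fin n) ℝ) (J : Finset (Fin n)) :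
    Matrix (Fin n) (Fin n) ℝ :=
  A.submatrix id (Subtype.val : J → Fin n) *
    (A.submatrix (Subtype.val : J → Fin n) (Subtype.val : J → Fin n))⁻¹ *
    A.submatrix (Subtype.val : J → Fin n) id

/-- Determinant of the principal submatrix `A(J,J)`. -/
noncomputable def pminor {n : ℕ} (A : Matrix (Fin n) (Fin n) ℝ) (J : Finset (Fin n)) : ℝ :=
  (A.submatrix (Subtype.val : J → Fin n) (Subtype.val : J → Fin n)).det

/-- Nuclear norm: sum of the singular values of `M`, i.e. of the square roots of the
eigenvalues of `Mᴴ M`. -/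
noncomputable def nuclearNorm {n : ℕ} (M : Matrix (Fin n) (Fin n) ℝ) : ℝ :=
  ∑ i, Real.sqrt ((Matrix.isHermitian_conjTranspose_mul_self M).eigenvalues i)

/-- Frobenius norm. -/
noncomputable def frobNorm {n : ℕ} (M : Matrix (Fin n) (Fin n) ℝ) : ℝ :=
  Real.sqrt (∑ i, ∑ j, (M i j) ^ 2)

/-- Spectral norm: the largest singular value. -/
noncomputable def specNorm {n : ℕ} (M : Matrix (Fin n) (Fin n) ℝ) : ℝ :=
  ⨆ i, Real.sqrt ((Matrix.isHermitian_conjTranspose_mul_self M).eigenvalues i)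

/-- Max norm: largest magnitude of an entry. -/
noncomputable def maxNorm {n : ℕ} (M : Matrix (Fin n) (Fin n) ℝ) : ℝ :=
  ⨆ i, ⨆ j, |M i j|

/-- The tuple `f` sorted in nonincreasing order. -/
noncomputable def sortedDesc {m : ℕ} (f : Fin m → ℝ) : Fin m → ℝ :=
  fun i => -(((fun j => -f j) ∘ Tuple.sort fun j => -f j) i)

/-- `Esum M k` is the sum of all `k × k` principal minors of `M`. -/
noncomputable def Esum {n : ℕ} (M : Matrix (Fin n) (Fin n) ℝ) (k : ℕ) : ℝ :=
  ∑ K ∈ Finset.powersetCard k (Finset.univ : Finset (Fin n)), pminor M K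

/-!
`S = A - A_J` is the Schur complement of `A(J,J)` in `A`, so it is positive semidefinite (its
largest entry in absolute value lies on the diagonal) and it vanishes on the columns in `J`.
For `k ∉ J` and `K = J ∪ {k}`, the Schur determinant formula gives
`det A(K,K) = det A(J,J) · S_kk`. For every eigenvalue `μ` of `A(K,K)`, the product of the
other eigenvalues is one of the summands of `tr adj A(K,K)`, so `det A(K,K) ≤ μ · tr adj A(K,K)`;
and `tr adj A(K,K)` is the sum of the `r + 1` principal `r × r` minors of `A(K,K)`, each at most
`det A(J,J)` by maximality. Finally, some eigenvalue of the compression `A(K,K)` is at most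
`σ_{r+1}(A)`: counting dimensions, some nonzero vector supported on `K` is orthogonal to the top
`r` eigenvectors of `A` (Courant–Fischer).
-/

namespace Matrix

section SchurComplement
variable {𝕜 : Type*} [RCLike 𝕜] {m k : Type*} [Fintype m] [Fintype k] [DecidableEq k]

theorem sub_mul_inv_mul_mul_eq_zero (A : Matrix m m 𝕜) (E : Matrix m k 𝕜)
    (hC : IsUnit (Eᴴ * A * E).det) :
    (A - A * E * (Eᴴ * A * E)⁻¹ * Eᴴ * A) * E = 0 := by
  rw [Matrix.sub_mul, sub_eq_zero, eq_comm]
  calc A * E * (Eᴴ * A * E)⁻¹ * Eᴴ * A * E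
      = A * E * ((Eᴴ * A * E)⁻¹ * (Eᴴ * A * E)) := by simp only [Matrix.mul_assoc]
    _ = A * E := by rw [nonsing_inv_mul _ hC, Matrix.mul_one]

open scoped ComplexOrder in
theorem PosSemidef.sub_mul_inv_mul [DecidableEq m] {A : Matrix m m 𝕜} (hA : A.PosSemidef)
    (E : Matrix m k 𝕜) (hC : IsUnit (Eᴴ * A * E).det) :
    (A - A * E * (Eᴴ * A * E)⁻¹ * Eᴴ * A).PosSemidef := by
  set C := Eᴴ * A * E
  set Q := E * C⁻¹ * Eᴴ
  have hQ : Qᴴ = Q := by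
    have : C⁻¹ᴴ = C⁻¹ := by rw [conjTranspose_nonsing_inv, (hA.conjTranspose_mul_mul_same E).1]
    simp only [Q, conjTranspose_mul, this, conjTranspose_conjTranspose, Matrix.mul_assoc]
  have hQAQ : Q * A * Q = Q := by
    calc Q * A * Q = E * (C⁻¹ * C) * C⁻¹ * Eᴴ := by simp only [Q, C, Matrix.mul_assoc]
      _ = Q := by rw [nonsing_inv_mul _ hC, Matrix.mul_one]
  have hS : A - A * E * C⁻¹ * Eᴴ * A = (1 - Q * A)ᴴ * A * (1 - Q * A) := by
    rw [conjTranspose_sub, conjTranspose_one, conjTranspose_mul, hQ, hA.1.eq]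
    calc A - A * E * C⁻¹ * Eᴴ * A = A - A * Q * A - A * Q * A + A * Q * A := by
          simp only [Q, Matrix.mul_assoc]; abel
      _ = A - A * Q * A - A * Q * A + A * (Q * A * Q) * A := by rw [hQAQ]
      _ = (1 - A * Q) * A * (1 - Q * A) := by noncomm_ring
  rw [hS]
  exact hA.conjTranspose_mul_mul_same _

end SchurComplement

section Rayleigh
variable {m : Type*} [Fintype m] [DecidableEq m] {M : Matrix m m ℝ}

theorem IsHermitian.dotProduct_mulVec_eq_sum_eigenvalues (hM : M.IsHermitian) (x : m → ℝ) :
    x ⬝ᵥ (M *ᵥ x) = ∑ i, hM.eigenvalues i *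
      ((star (hM.eigenvectorUnitary : Matrix m m ℝ) *ᵥ x) i) ^ 2 := by
  set U := (hM.eigenvectorUnitary : Matrix m m ℝ)
  set c := star U *ᵥ x
  have hx : x = U *ᵥ c := by
    rw [mulVec_mulVec, Unitary.mul_star_self_of_mem hM.eigenvectorUnitary.2, one_mulVec]
  have hD : Uᵀ * M * U = diagonal hM.eigenvalues := by
    have := hM.conjStarAlgAut_star_eigenvectorUnitary
    simp only [Unitary.conjStarAlgAut_apply, Unitary.coe_star, star_star] at this
    rw [← conjTranspose_eq_transpose_of_trivial, ← star_eq_conjTranspose, this]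
    rfl
  clear_value c
  rw [hx, dotProduct_comm, ← dotProduct_transpose_mulVec, mulVec_mulVec, mulVec_mulVec, hD]
  simp only [dotProduct, mulVec_diagonal]
  exact Finset.sum_congr rfl fun i _ => by ring

theorem star_unitary_mulVec_dotProduct_self (U : unitaryGroup m ℝ) (x : m → ℝ) :
    (star (U : Matrix m m ℝ) *ᵥ x) ⬝ᵥ (star (U : Matrix m m ℝ) *ᵥ x) = x ⬝ᵥ x := by
  rw [dotProduct_comm, ← dotProduct_transpose_mulVec, mulVec_mulVec, star_eq_conjTranspose,
    conjTranspose_eq_transpose_of_trivial, transpose_transpose,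
    ← conjTranspose_eq_transpose_of_trivial, ← star_eq_conjTranspose,
    Unitary.mul_star_self_of_mem U.2, one_mulVec]

theorem IsHermitian.dotProduct_mulVec_le_mul_dotProduct_self (hM : M.IsHermitian)
    {x : m → ℝ} {d : ℝ}
    (h : ∀ i, (star (hM.eigenvectorUnitary : Matrix m m ℝ) *ᵥ x) i ≠ 0 → hM.eigenvalues i ≤ d) :
    x ⬝ᵥ (M *ᵥ x) ≤ d * (x ⬝ᵥ x) := by
  rw [hM.dotProduct_mulVec_eq_sum_eigenvalues,
    ← star_unitary_mulVec_dotProduct_self hM.eigenvectorUnitary, dotProduct, Finset.mul_sum]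
  refine Finset.sum_le_sum fun i _ => ?_
  by_cases hi : (star (hM.eigenvectorUnitary : Matrix m m ℝ) *ᵥ x) i = 0
  · simp [hi]
  · rw [← sq]
    exact mul_le_mul_of_nonneg_right (h i hi) (sq_nonneg _)

theorem IsHermitian.mul_dotProduct_self_le_dotProduct_mulVec (hM : M.IsHermitian) (x : m → ℝ)
    {a : ℝ} (h : ∀ i, a ≤ hM.eigenvalues i) : a * (x ⬝ᵥ x) ≤ x ⬝ᵥ (M *ᵥ x) := by
  rw [hM.dotProduct_mulVec_eq_sum_eigenvalues,
    ← star_unitary_mulVec_dotProduct_self hM.eigenvectorUnitary, dotProduct, Finset.mul_sum]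
  refine Finset.sum_le_sum fun i _ => ?_
  rw [← sq]
  exact mul_le_mul_of_nonneg_right (h i) (sq_nonneg _)

theorem IsHermitian.exists_eigenvalues_le_of_compression {k : Type*} [Fintype k] [DecidableEq k]
    {A : Matrix m m ℝ} (hA : A.IsHermitian) {B : Matrix k k ℝ} (hB : B.IsHermitian)
    {P : Matrix m k ℝ} (hP : Pᵀ * P = 1) (hPB : B = Pᵀ * A * P) {T : Finset m}
    (hT : T.card < Fintype.card k) {d : ℝ} (hd : ∀ t ∉ T, hA.eigenvalues t ≤ d) :
    ∃ i, hB.eigenvalues i ≤ d := by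
  set U := star (hA.eigenvectorUnitary : Matrix m m ℝ)
  let F : (k → ℝ) →ₗ[ℝ] T → ℝ := LinearMap.funLeft ℝ ℝ Subtype.val ∘ₗ (U * P).mulVecLin
  obtain ⟨y, hyF, hy⟩ := Submodule.exists_mem_ne_zero_of_ne_bot
    (F.ker_ne_bot_of_finrank_lt (by simpa using hT))
  have hUPy : ∀ t ∈ T, (U *ᵥ (P *ᵥ y)) t = 0 := fun t ht => by
    simpa [F, mulVec_mulVec] using congr_fun (LinearMap.mem_ker.mp hyF) ⟨t, ht⟩
  have hyy : 0 < y ⬝ᵥ y :=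
    (dotProduct_self_star_nonneg y).lt_of_ne' (dotProduct_self_eq_zero.not.mpr hy)
  have : Nonempty k := (Function.ne_iff.mp hy).nonempty
  obtain ⟨i, hi⟩ := Finite.exists_min hB.eigenvalues
  refine ⟨i, le_of_mul_le_mul_right ?_ hyy⟩
  calc hB.eigenvalues i * (y ⬝ᵥ y) ≤ y ⬝ᵥ (B *ᵥ y) :=
        hB.mul_dotProduct_self_le_dotProduct_mulVec y hi
    _ = (P *ᵥ y) ⬝ᵥ (A *ᵥ (P *ᵥ y)) := by
      rw [hPB, ← mulVec_mulVec, ← mulVec_mulVec, dotProduct_transpose_mulVec, dotProduct_comm]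
    _ ≤ d * ((P *ᵥ y) ⬝ᵥ (P *ᵥ y)) :=
      hA.dotProduct_mulVec_le_mul_dotProduct_self fun t ht => hd t fun htT => ht (hUPy t htT)
    _ = d * (y ⬝ᵥ y) := by
      rw [dotProduct_comm, ← dotProduct_transpose_mulVec, mulVec_mulVec, hP, one_mulVec]

end Rayleigh

section Adjugate
variable {R : Type*} [CommRing R] {m : Type*} [Fintype m] [DecidableEq m]

theorem trace_adjugate_mul_mul_of_mul_eq_one {U V : Matrix m m R} (D : Matrix m m R)
    (h : V * U = 1) : (U * D * V).adjugate.trace = D.adjugate.trace := by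
  rw [adjugate_mul_distrib, adjugate_mul_distrib, trace_mul_comm, Matrix.mul_assoc,
    ← adjugate_mul_distrib, h, adjugate_one, Matrix.mul_one]

theorem IsHermitian.trace_adjugate_eq_sum_prod_eigenvalues {𝕜 : Type*} [RCLike 𝕜]
    {M : Matrix m m 𝕜} (hM : M.IsHermitian) :
    M.adjugate.trace = ∑ i, ∏ j ∈ Finset.univ.erase i, (hM.eigenvalues j : 𝕜) := by
  conv_lhs => rw [hM.spectral_theorem, Unitary.conjStarAlgAut_apply]
  rw [trace_adjugate_mul_mul_of_mul_eq_one _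
      (Unitary.star_mul_self_of_mem hM.eigenvectorUnitary.2), adjugate_diagonal, trace_diagonal]
  rfl

theorem PosSemidef.det_le_eigenvalues_mul_trace_adjugate {M : Matrix m m ℝ} (hM : M.PosSemidef)
    (i : m) : M.det ≤ hM.1.eigenvalues i * M.adjugate.trace := by
  have hμ := hM.eigenvalues_nonneg
  rw [hM.1.det_eq_prod_eigenvalues, hM.1.trace_adjugate_eq_sum_prod_eigenvalues,
    ← Finset.mul_prod_erase Finset.univ _ (Finset.mem_univ i)]
  simp only [RCLike.ofReal_real_eq_id, id]
  refine mul_le_mul_of_nonneg_left ?_ (hμ i)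
  exact Finset.single_le_sum (f := fun i => ∏ j ∈ Finset.univ.erase i, hM.1.eigenvalues j)
    (fun l _ => Finset.prod_nonneg fun j _ => hμ j) (Finset.mem_univ i)

theorem adjugate_apply_self (M : Matrix m m R) (j : m) :
    M.adjugate j j = (M.submatrix (Subtype.val : {x // x ≠ j} → m) Subtype.val).det := by
  rw [adjugate_apply, ← det_submatrix_equiv_self (Equiv.sumCompl (· = j))]
  have : (M.updateRow j (Pi.single j 1)).submatrix (Equiv.sumCompl (· = j))
        (Equiv.sumCompl (· = j)) =
      fromBlocks 1 0 (of fun (a : {x // x ≠ j}) _ => M a j) (M.submatrix Subtype.val Subtype.val) := by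
    ext (⟨a, rfl⟩ | ⟨a, ha⟩) (⟨b, hb⟩ | ⟨b, hb⟩)
    · simp [hb]
    · simp [updateRow_apply, hb]
    · simp [updateRow_apply, ha, hb]
    · simp [updateRow_apply, ha]
  rw [this, det_fromBlocks_zero₁₂, det_one, one_mul]

end Adjugate

theorem PosSemidef.abs_apply_le_max {m : Type*} {S : Matrix m m ℝ} (hS : S.PosSemidef) (i j : m) :
    |S i j| ≤ max (S i i) (S j j) := by
  have hminor := (hS.submatrix ![i, j]).det_nonneg
  have hsym : S j i = S i j := by simpa using hS.1.apply i j
  simp only [det_fin_two, submatrix_apply, Matrix.cons_val_zero, Matrix.cons_val_one, hsym]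
    at hminor
  refine abs_le_of_sq_le_sq ?_ (le_max_of_le_left hS.diag_nonneg)
  have := hS.diag_nonneg (i := i)
  have := hS.diag_nonneg (i := j)
  nlinarith [le_max_left (S i i) (S j j), le_max_right (S i i) (S j j)]

section Selection
variable {R : Type*} [Semiring R] {l m k : Type*} [Fintype m] [DecidableEq m]

theorem mul_one_submatrix_id (A : Matrix l m R) (f : k → m) :
    A * (1 : Matrix m m R).submatrix id f = A.submatrix id f :=
  mul_submatrix_one (Equiv.refl m) f A

theorem one_submatrix_id_mul (A : Matrix m l R) (f : k → m) :
    (1 : Matrix m m R).submatrix f id * A = A.submatrix f id :=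
  one_submatrix_mul f (Equiv.refl m) A

theorem conjTranspose_one_submatrix_mul_mul [StarRing R] (A : Matrix m m R) (f : k → m) :
    ((1 : Matrix m m R).submatrix id f)ᴴ * A * (1 : Matrix m m R).submatrix id f =
      A.submatrix f f := by
  rw [conjTranspose_submatrix, conjTranspose_one, one_submatrix_id_mul, mul_one_submatrix_id,
    submatrix_submatrix]
  rfl

end Selection

end Matrix

theorem exists_card_eq_forall_notMem_le_sortedDesc {m : ℕ} (f : Fin m → ℝ) (i : Fin m) :
    ∃ T : Finset (Fin m), T.card = i ∧ ∀ t ∉ T, f t ≤ sortedDesc f i := by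
  set σ := Tuple.sort fun j => -f j
  refine ⟨(Finset.Iio i).map σ.toEmbedding, by simp, fun t ht => ?_⟩
  have hi : i ≤ σ.symm t := by
    by_contra! h
    exact ht (Finset.mem_map_equiv.2 (by simpa using h))
  simpa [sortedDesc, σ] using Tuple.monotone_sort (fun j => -f j) hi

theorem maxNorm_le {n : ℕ} {M : Matrix (Fin n) (Fin n) ℝ} {c : ℝ} (hc : 0 ≤ c)
    (h : ∀ i j, |M i j| ≤ c) : maxNorm M ≤ c :=
  Real.iSup_le (fun i => Real.iSup_le (h i) hc) hc

section CrossApprox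
variable {n : ℕ}

theorem crossApprox_eq_mul (A : Matrix (Fin n) (Fin n) ℝ) (J : Finset (Fin n)) :
    let E : Matrix (Fin n) J ℝ := (1 : Matrix (Fin n) (Fin n) ℝ).submatrix id Subtype.val
    crossApprox A J = A * E * (Eᴴ * A * E)⁻¹ * Eᴴ * A := by
  intro E
  rw [conjTranspose_one_submatrix_mul_mul, Matrix.mul_assoc _ _ A, conjTranspose_submatrix,
    conjTranspose_one, one_submatrix_id_mul, mul_one_submatrix_id]
  rfl

theorem Matrix.PosSemidef.sub_crossApprox {A : Matrix (Fin n) (Fin n) ℝ} (hA : A.PosSemidef)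
    {J : Finset (Fin n)} (hJ : pminor A J ≠ 0) : (A - crossApprox A J).PosSemidef := by
  rw [crossApprox_eq_mul]
  apply hA.sub_mul_inv_mul
  rwa [conjTranspose_one_submatrix_mul_mul, isUnit_iff_ne_zero]

theorem sub_crossApprox_apply_of_mem (A : Matrix (Fin n) (Fin n) ℝ) {J : Finset (Fin n)}
    (hJ : pminor A J ≠ 0) (i : Fin n) {k : Fin n} (hk : k ∈ J) :
    (A - crossApprox A J) i k = 0 := by
  have h := sub_mul_inv_mul_mul_eq_zero A
    ((1 : Matrix (Fin n) (Fin n) ℝ).submatrix id (Subtype.val : J → Fin n))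
    (by rwa [conjTranspose_one_submatrix_mul_mul, isUnit_iff_ne_zero])
  rw [← crossApprox_eq_mul, mul_one_submatrix_id] at h
  exact congr_fun₂ h i ⟨k, hk⟩

theorem pminor_insert (A : Matrix (Fin n) (Fin n) ℝ) {J : Finset (Fin n)} {k : Fin n}
    (hk : k ∉ J) (hJ : pminor A J ≠ 0) :
    pminor A (insert k J) = pminor A J * (A - crossApprox A J) k k := by
  let e : J ⊕ Unit ≃ (insert k J : Finset (Fin n)) :=
    ((Finset.subtypeInsertEquivOption hk).trans (Equiv.optionEquivSumPUnit J)).symm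
  set C := A.submatrix (Subtype.val : J → Fin n) Subtype.val
  have hblocks : (A.submatrix Subtype.val Subtype.val).submatrix e e =
      fromBlocks C (of fun p _ => A p k) (of fun _ q => A k q) (of fun _ _ => A k k) := by
    ext (p | _) (q | _) <;> rfl
  let := invertibleOfIsUnitDet C (isUnit_iff_ne_zero.mpr hJ)
  rw [pminor, ← det_submatrix_equiv_self e, hblocks, det_fromBlocks₁₁, invOf_eq_nonsing_inv]
  congr 1
  rw [det_unique]
  simp [crossApprox, mul_apply, C]

theorem adjugate_submatrix_apply_self_eq_pminor_erase (A : Matrix (Fin n) (Fin n) ℝ)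
    (K : Finset (Fin n)) (j : K) :
    (A.submatrix (Subtype.val : K → Fin n) Subtype.val).adjugate j j = pminor A (K.erase j) := by
  let e : {x : K // x ≠ j} ≃ K.erase j :=
    { toFun := fun x => ⟨x.1, Finset.mem_erase.2 ⟨fun h => x.2 (Subtype.ext h), x.1.2⟩⟩
      invFun := fun y => ⟨⟨y, Finset.mem_of_mem_erase y.2⟩,
        fun h => Finset.ne_of_mem_erase y.2 congr($h.1)⟩ }
  rw [adjugate_apply_self, pminor, ← det_submatrix_equiv_self e]
  rfl

theorem sub_crossApprox_apply_self_le {A : Matrix (Fin n) (Fin n) ℝ} (hA : A.PosSemidef)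
    {r : ℕ} {J : Finset (Fin n)} (hJcard : J.card = r) (hJ : pminor A J ≠ 0)
    (hmax : ∀ K : Finset (Fin n), K.card = r → |pminor A K| ≤ |pminor A J|)
    {T : Finset (Fin n)} (hT : T.card = r) {d : ℝ} (hd : ∀ t ∉ T, hA.1.eigenvalues t ≤ d)
    {k : Fin n} (hk : k ∉ J) : (A - crossApprox A J) k k ≤ (r + 1) * d := by
  set K := insert k J
  have hKcard : K.card = r + 1 := by rw [Finset.card_insert_of_notMem hk, hJcard]
  set P := (1 : Matrix (Fin n) (Fin n) ℝ).submatrix id (Subtype.val : K → Fin n)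
  have hPA : ∀ M : Matrix (Fin n) (Fin n) ℝ, Pᵀ * M * P = M.submatrix Subtype.val Subtype.val :=
    fun M => by rw [← conjTranspose_eq_transpose_of_trivial, conjTranspose_one_submatrix_mul_mul]
  have hB := hA.submatrix (Subtype.val : K → Fin n)
  obtain ⟨i, hi⟩ := hA.1.exists_eigenvalues_le_of_compression hB.1
    (by rw [← Matrix.mul_one Pᵀ, hPA, submatrix_one _ Subtype.val_injective]) (hPA A).symm
    (by simp [hT, hKcard]) hd
  have hJpos : 0 < pminor A J := (hA.submatrix _).det_nonneg.lt_of_ne' hJ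
  have htr : (A.submatrix (Subtype.val : K → Fin n) Subtype.val).adjugate.trace
      ≤ (r + 1) * pminor A J := by
    calc _ = ∑ j : K, pminor A (K.erase j) := by
          simp only [Matrix.trace, Matrix.diag, adjugate_submatrix_apply_self_eq_pminor_erase]
      _ ≤ ∑ _j : K, pminor A J := Finset.sum_le_sum fun j _ => (le_abs_self _).trans <|
          (hmax _ (by rw [Finset.card_erase_of_mem j.2, hKcard]; rfl)).trans (abs_of_pos hJpos).le
      _ = (r + 1) * pminor A J := by simp [hKcard]
  have hdet := hB.det_le_eigenvalues_mul_trace_adjugate i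
  rw [← pminor, pminor_insert A hk hJ] at hdet
  refine le_of_mul_le_mul_left ?_ hJpos
  calc pminor A J * (A - crossApprox A J) k k
      ≤ hB.1.eigenvalues i * ((r + 1) * pminor A J) :=
        hdet.trans (mul_le_mul_of_nonneg_left htr (hB.eigenvalues_nonneg i))
    _ ≤ d * ((r + 1) * pminor A J) := mul_le_mul_of_nonneg_right hi (by positivity)
    _ = pminor A J * ((r + 1) * d) := by ring

end CrossApprox

/-- If `A` is SPSD, `J` has cardinality `r < n`, `A(J,J)` is invertible and
`J` maximizes `|det A(Ĵ,Ĵ)|` over all index sets `Ĵ` of cardinality `r`, then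
`‖A - A_J‖_max ≤ (r+1) σ_{r+1}(A)` (0-based index `r` of the nonincreasingly sorted
eigenvalues). -/
theorem cross_approx_maxNorm_of_max_volume {n r : ℕ} (hrn : r < n)
    (A : Matrix (Fin n) (Fin n) ℝ) (hA : A.PosSemidef)
    (J : Finset (Fin n)) (hJcard : J.card = r) (hJinv : pminor A J ≠ 0)
    (hmax : ∀ K : Finset (Fin n), K.card = r → |pminor A K| ≤ |pminor A J|) :
    maxNorm (A - crossApprox A J) ≤ (r + 1 : ℝ) * sortedDesc hA.1.eigenvalues ⟨r, hrn⟩ := by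
  set d := sortedDesc hA.1.eigenvalues ⟨r, hrn⟩
  obtain ⟨T, hT, hd⟩ := exists_card_eq_forall_notMem_le_sortedDesc hA.1.eigenvalues ⟨r, hrn⟩
  obtain ⟨t, -, ht⟩ := Finset.exists_mem_notMem_of_card_lt_card (s := T) (t := Finset.univ)
    (by simpa [hT])
  have hd0 : 0 ≤ d := (hA.eigenvalues_nonneg t).trans (hd t ht)
  have hdiag : ∀ k, (A - crossApprox A J) k k ≤ (r + 1) * d := by
    intro k
    by_cases hk : k ∈ J
    · rw [sub_crossApprox_apply_of_mem A hJinv k hk]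
      positivity
    · exact sub_crossApprox_apply_self_le hA hJcard hJinv hmax hT hd hk
  exact maxNorm_le (by positivity) fun i j =>
    ((hA.sub_crossApprox hJinv).abs_apply_le_max i j).trans (max_le (hdiag i) (hdiag j))
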